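/- Let H be a Lie group (or Lie algebra h) and ω a nondegenerate left-invariant closed 2-form on H, i.e., a nondegenerate 2-cocycle ω ∈ Λ²h* satisfying ω([x,y],z) + ω([y,z],x) + ω([z,x],y) = 0. Then r := ω^{−1} ∈ Λ²h (the inverse of ω regarded as an isomorphism h → h*) satisfies the classical Yang–Baxter equation [r₁₂, r₁₃] + [r₁₂, r₂₃] + [r₁₃, r₂₃] = 0. -/

import Mathlib

open TensorProduct

namespace Stmt7

attribute [local instance 100] LieRing.ofAssociativeRing

variable (g : Type*) [LieRing g] [LieAlgebra ℂ g]

/-- `U(g) ⊗ U(g) ⊗ U(g)`. -/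
noncomputable abbrev U3 :=
  UniversalEnvelopingAlgebra ℂ g ⊗[ℂ] (UniversalEnvelopingAlgebra ℂ g ⊗[ℂ]
    UniversalEnvelopingAlgebra ℂ g)

variable {g}

/-- `x ↦ ι(x) ⊗ 1 ⊗ 1 : g → U(g)^{⊗3}`. -/
noncomputable def j1 : g →ₗ[ℂ] U3 g :=
  (TensorProduct.mk ℂ (UniversalEnvelopingAlgebra ℂ g) _).flip (1 ⊗ₜ 1) ∘ₗ
    (UniversalEnvelopingAlgebra.ι ℂ : g →ₗ⁅ℂ⁆ _).toLinearMap

/-- `x ↦ 1 ⊗ ι(x) ⊗ 1 : g → U(g)^{⊗3}`. -/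
noncomputable def j2 : g →ₗ[ℂ] U3 g :=
  TensorProduct.mk ℂ (UniversalEnvelopingAlgebra ℂ g) _ 1 ∘ₗ
    (TensorProduct.mk ℂ (UniversalEnvelopingAlgebra ℂ g) _).flip 1 ∘ₗ
      (UniversalEnvelopingAlgebra.ι ℂ : g →ₗ⁅ℂ⁆ _).toLinearMap

/-- `x ↦ 1 ⊗ 1 ⊗ ι(x) : g → U(g)^{⊗3}`. -/
noncomputable def j3 : g →ₗ[ℂ] U3 g :=
  TensorProduct.mk ℂ (UniversalEnvelopingAlgebra ℂ g) _ 1 ∘ₗ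
    TensorProduct.mk ℂ (UniversalEnvelopingAlgebra ℂ g) _ 1 ∘ₗ
      (UniversalEnvelopingAlgebra.ι ℂ : g →ₗ⁅ℂ⁆ _).toLinearMap

/-- The linear map `g ⊗ g → U(g)^{⊗3}` sending `x ⊗ y ↦ f(x) * f'(y)`. -/
noncomputable def legMap (f f' : g →ₗ[ℂ] U3 g) : g ⊗[ℂ] g →ₗ[ℂ] U3 g :=
  TensorProduct.lift ((LinearMap.mul ℂ (U3 g)).compl₁₂ f f')

/-- `r₁₂ ∈ U(g)^{⊗3}` for `r ∈ g ⊗ g`. -/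
noncomputable def r12 (r : g ⊗[ℂ] g) : U3 g := legMap j1 j2 r

/-- `r₁₃ ∈ U(g)^{⊗3}` for `r ∈ g ⊗ g`. -/
noncomputable def r13 (r : g ⊗[ℂ] g) : U3 g := legMap j1 j3 r

/-- `r₂₃ ∈ U(g)^{⊗3}` for `r ∈ g ⊗ g`. -/
noncomputable def r23 (r : g ⊗[ℂ] g) : U3 g := legMap j2 j3 r

/-- The classical Yang–Baxter equation, stated in `U(g)^{⊗3}`. -/
def CYBE (r : g ⊗[ℂ] g) : Prop :=
  ⁅r12 r, r13 r⁆ + ⁅r12 r, r23 r⁆ + ⁅r13 r, r23 r⁆ = 0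

/-- The linear map `g* → g` induced by `r ∈ g ⊗ g`, `ξ ↦ (ξ ⊗ id)(r)`. -/
noncomputable def rTilde (r : g ⊗[ℂ] g) (ξ : Module.Dual ℂ g) : g :=
  TensorProduct.lid ℂ g (TensorProduct.map ξ LinearMap.id r)

/-! Writing `r = ∑ aᵢ ⊗ bᵢ`, the three commutators in `U(h)^{⊗3}` are the image under
`ι ⊗ ι ⊗ ι` of the element
`[[r, r]] = cybMap (r ⊗ r) = ∑ [aᵢ, aⱼ] ⊗ bᵢ ⊗ bⱼ + aᵢ ⊗ [bᵢ, aⱼ] ⊗ bⱼ + aᵢ ⊗ aⱼ ⊗ [bᵢ, bⱼ]`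
of `h^{⊗3}`. For skew `r = ω⁻¹`, pairing `[[r, r]]` with `ω x ⊗ ω y ⊗ ω z` gives
`ω(x, [y, z]) - ω(y, [x, z]) + ω(z, [x, y])`, which vanishes by the cocycle identity; as these
functionals separate the points of `h^{⊗3}`, already `[[r, r]] = 0`. -/

section DualSeparation

variable {R M N P : Type*} [CommSemiring R]
  [AddCommMonoid M] [Module R M] [Module.Free R M] [Module.Finite R M]
  [AddCommMonoid N] [Module R N] [Module.Free R N] [Module.Finite R N]
  [AddCommMonoid P] [Module R P] [Module.Free R P] [Module.Finite R P]

theorem eq_zero_of_forall_dualDistrib_tmul_eq_zero {t : M ⊗[R] N}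
    (ht : ∀ (ξ : Module.Dual R M) (χ : Module.Dual R N), dualDistrib R M N (ξ ⊗ₜ χ) t = 0) :
    t = 0 := by
  refine (Module.forall_dual_apply_eq_zero_iff R t).mp fun φ => ?_
  obtain ⟨ψ, rfl⟩ := (dualDistribEquiv R M N).surjective φ
  induction ψ using TensorProduct.induction_on with
  | zero => simp
  | tmul ξ χ => exact ht ξ χ
  | add ψ ψ' hψ hψ' => simp_all

theorem eq_zero_of_forall_dualDistrib_tmul_tmul_eq_zero {t : M ⊗[R] (N ⊗[R] P)}
    (ht : ∀ (ξ : Module.Dual R M) (η : Module.Dual R N) (ζ : Module.Dual R P),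
      dualDistrib R M (N ⊗[R] P) (ξ ⊗ₜ dualDistrib R N P (η ⊗ₜ ζ)) t = 0) :
    t = 0 := by
  refine eq_zero_of_forall_dualDistrib_tmul_eq_zero fun ξ χ => ?_
  obtain ⟨ψ, rfl⟩ := (dualDistribEquiv R N P).surjective χ
  induction ψ using TensorProduct.induction_on with
  | zero => simp
  | tmul η ζ => exact ht ξ η ζ
  | add ψ ψ' hψ hψ' => simp_all [tmul_add]

end DualSeparation

section ClassicalYangBaxter

variable (R L : Type*) [CommRing R] [LieRing L] [LieAlgebra R L]

noncomputable def cybMap : (L ⊗[R] L) ⊗[R] (L ⊗[R] L) →ₗ[R] L ⊗[R] (L ⊗[R] L) :=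
  let β : L ⊗[R] L →ₗ[R] L := LieModule.toModuleHom R L L
  LinearMap.rTensor _ β ∘ₗ (tensorTensorTensorComm R L L L L).toLinearMap +
    LinearMap.lTensor L (LinearMap.rTensor L β ∘ₗ (TensorProduct.assoc R L L L).symm.toLinearMap) ∘ₗ
      (TensorProduct.assoc R L L (L ⊗[R] L)).toLinearMap +
    LinearMap.lTensor L (LinearMap.lTensor L β) ∘ₗ
      (TensorProduct.assoc R L L (L ⊗[R] L)).toLinearMap ∘ₗ
        (tensorTensorTensorComm R L L L L).toLinearMap

variable {R L}

@[simp]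
theorem cybMap_tmul (a b c d : L) :
    cybMap R L ((a ⊗ₜ b) ⊗ₜ (c ⊗ₜ d)) =
      ⁅a, c⁆ ⊗ₜ (b ⊗ₜ d) + a ⊗ₜ (⁅b, c⁆ ⊗ₜ d) + a ⊗ₜ (c ⊗ₜ ⁅b, d⁆) := by
  simp [cybMap]

end ClassicalYangBaxter

section Complex

variable {L : Type*} [LieRing L] [LieAlgebra ℂ L]

theorem rTilde_neg (r : L ⊗[ℂ] L) (ξ : Module.Dual ℂ L) : rTilde (-r) ξ = -rTilde r ξ := by
  simp [rTilde]

theorem dualDistrib_cybMap (r s : L ⊗[ℂ] L) (ξ η ζ : Module.Dual ℂ L) :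
    dualDistrib ℂ L (L ⊗[ℂ] L) (ξ ⊗ₜ dualDistrib ℂ L L (η ⊗ₜ ζ)) (cybMap ℂ L (r ⊗ₜ s)) =
      ξ ⁅rTilde (TensorProduct.comm ℂ L L r) η, rTilde (TensorProduct.comm ℂ L L s) ζ⁆ +
        η ⁅rTilde r ξ, rTilde (TensorProduct.comm ℂ L L s) ζ⁆ + ζ ⁅rTilde r ξ, rTilde s η⁆ := by
  induction r using TensorProduct.induction_on with
  | zero => simp [rTilde]
  | add r r' hr hr' => simp only [add_tmul, map_add, hr, hr']; simp [rTilde]; ring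
  | tmul a b =>
    induction s using TensorProduct.induction_on with
    | zero => simp [rTilde]
    | add s s' hs hs' => simp only [tmul_add, map_add, hs, hs']; simp [rTilde]; ring
    | tmul c d => simp [rTilde]; ring

noncomputable def iota3 : L ⊗[ℂ] (L ⊗[ℂ] L) →ₗ[ℂ] U3 L :=
  let ι : L →ₗ[ℂ] UniversalEnvelopingAlgebra ℂ L :=
    (UniversalEnvelopingAlgebra.ι ℂ : L →ₗ⁅ℂ⁆ _).toLinearMap
  map ι (map ι ι)

theorem lie_legs_eq_iota3_cybMap (r s : L ⊗[ℂ] L) :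
    ⁅r12 r, r13 s⁆ + ⁅r12 r, r23 s⁆ + ⁅r13 r, r23 s⁆ = iota3 (cybMap ℂ L (r ⊗ₜ s)) := by
  induction r using TensorProduct.induction_on with
  | zero => simp [r12, r13]
  | add r r' hr hr' =>
    simp only [r12, r13, map_add, add_lie, add_tmul] at *
    rw [← hr, ← hr']; abel
  | tmul a b =>
    induction s using TensorProduct.induction_on with
    | zero => simp [r13, r23]
    | add s s' hs hs' =>
      simp only [r13, r23, map_add, lie_add, tmul_add] at *
      rw [← hs, ← hs']; abel
    | tmul c d =>
      simp [r12, r13, r23, legMap, j1, j2, j3, iota3, Ring.lie_def,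
        Algebra.TensorProduct.tmul_mul_tmul, sub_tmul, tmul_sub]

end Complex

/-- Let `h` be a (finite-dimensional) Lie algebra and `ω ∈ Λ²h*` a
nondegenerate left-invariant 2-form, i.e. a skew bilinear form satisfying the 2-cocycle
condition `ω([x,y],z) + ω([y,z],x) + ω([z,x],y) = 0`. Then `r := ω⁻¹ ∈ Λ²h` (the element
of `Λ²h` corresponding to the inverse of the isomorphism `h → h*` induced by `ω`)
satisfies the classical Yang–Baxter equation
`[r₁₂, r₁₃] + [r₁₂, r₂₃] + [r₁₃, r₂₃] = 0`. -/
theorem stmt7 {h : Type*} [LieRing h] [LieAlgebra ℂ h] [Module.Finite ℂ h]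
    (ω : h →ₗ[ℂ] h →ₗ[ℂ] ℂ)
    (hskewω : ∀ x y : h, ω x y = -ω y x)
    (hcocycle : ∀ x y z : h, ω ⁅x, y⁆ z + ω ⁅y, z⁆ x + ω ⁅z, x⁆ y = 0)
    (r : h ⊗[ℂ] h) (hskewr : TensorProduct.comm ℂ h h r = -r)
    (hinv₁ : ∀ x : h, rTilde r (ω x) = x)
    (hinv₂ : ∀ ξ : Module.Dual ℂ h, ω (rTilde r ξ) = ξ) :
    CYBE r := by
  have hcyb : cybMap ℂ h (r ⊗ₜ r) = 0 := by
    refine eq_zero_of_forall_dualDistrib_tmul_tmul_eq_zero fun ξ η ζ => ?_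
    obtain ⟨x, rfl⟩ : ∃ x, ω x = ξ := ⟨_, hinv₂ ξ⟩
    obtain ⟨y, rfl⟩ : ∃ y, ω y = η := ⟨_, hinv₂ η⟩
    obtain ⟨z, rfl⟩ : ∃ z, ω z = ζ := ⟨_, hinv₂ ζ⟩
    rw [dualDistrib_cybMap, hskewr]
    simp only [rTilde_neg, hinv₁, neg_lie, lie_neg, neg_neg, map_neg]
    have hzx : ω ⁅x, z⁆ y = -ω ⁅z, x⁆ y := by rw [← lie_skew, map_neg, LinearMap.neg_apply]
    linear_combination hskewω x ⁅y, z⁆ - hskewω y ⁅x, z⁆ + hskewω z ⁅x, y⁆ - hcocycle x y z + hzx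
  rw [CYBE, lie_legs_eq_iota3_cybMap, hcyb, map_zero]

end Stmt7
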